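/- arXiv:2508.17022 — 4 statements merged into one kernel-verified Lean document; each statement's English description precedes it below -/
import Mathlib

section
/- Let S be a numerical semigroup with multiplicity m_S (the least nonzero element of S), and let q ≥ 1. Define the Geil-Matsumoto bound GM_q(S) := #(S \ (qS* + S)) + 1, where S* = S \ {0} and qS* + S = {qa + b : a ∈ S*, b ∈ S}. Then GM_q(S) ≤ q·m_S + 1. -/
/-!
Write `n = q·m`. Since `n = q·m + 0` with `m ∈ S*`, every element of `S \ (qS* + S)` lies in the
Apéry set `{s ∈ S | s ∉ n + S}`. Two elements `x ≤ y` of that set congruent modulo `n` differ by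
a multiple `k·n`, and for `k ≥ 1` we would get `y = n + (x + (k-1)·n) ∈ n + S`;
so `x ↦ x % n` is injective on the Apéry set, which therefore has at most `n` elements.
-/

open Set

def aperySet (S : Set ℕ) (n : ℕ) : Set ℕ := S \ ((n + ·) '' S)

section

variable {S : Set ℕ} (hadd : ∀ a ∈ S, ∀ b ∈ S, a + b ∈ S)
include hadd

theorem add_mul_mem {x n : ℕ} (hx : x ∈ S) (hn : n ∈ S) (k : ℕ) : x + k * n ∈ S := by
  induction k with
  | zero => simpa using hx
  | succ k ih => simpa [Nat.succ_mul, Nat.add_assoc] using hadd _ ih n hn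

theorem aperySet_injOn_mod {n : ℕ} (hn : n ∈ S) : InjOn (· % n) (aperySet S n) := by
  intro x hx y hy hxy
  wlog hle : x ≤ y generalizing x y
  · exact (this hy hx hxy.symm (le_of_not_ge hle)).symm
  obtain ⟨k, hk⟩ := (Nat.modEq_iff_dvd' hle).mp hxy
  cases k with
  | zero => omega
  | succ k =>
    refine absurd ⟨x + k * n, add_mul_mem hadd hx.1 hn k, ?_⟩ hy.2
    simp only [Nat.mul_succ] at hk
    lia

theorem finite_aperySet {n : ℕ} (hn : n ∈ S) (hn0 : n ≠ 0) : (aperySet S n).Finite :=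
  (finite_Iio n).of_injOn (f := (· % n)) (fun _ _ => Nat.mod_lt _ (Nat.pos_of_ne_zero hn0))
    (aperySet_injOn_mod hadd hn)

theorem ncard_aperySet_le {n : ℕ} (hn : n ∈ S) (hn0 : n ≠ 0) : (aperySet S n).ncard ≤ n :=
  calc (aperySet S n).ncard ≤ (Iio n).ncard :=
        ncard_le_ncard_of_injOn (· % n) (fun _ _ => Nat.mod_lt _ (Nat.pos_of_ne_zero hn0))
          (aperySet_injOn_mod hadd hn)
    _ = n := ncard_Iio_nat n

end

theorem stmt_5_general (S : Set ℕ)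
    (hadd : ∀ a ∈ S, ∀ b ∈ S, a + b ∈ S)
    (m : ℕ) (hm : m ∈ S) (hm0 : m ≠ 0)
    (q : ℕ) (hq : 1 ≤ q) :
    (S \ {x | ∃ a ∈ S, a ≠ 0 ∧ ∃ b ∈ S, x = q * a + b}).ncard + 1 ≤ q * m + 1 := by
  have hqm : q * m ∈ S := by
    obtain ⟨k, rfl⟩ : ∃ k, q = k + 1 := ⟨q - 1, by omega⟩
    simpa [Nat.succ_mul, Nat.add_comm] using add_mul_mem hadd hm hm k
  have hqm0 : q * m ≠ 0 := Nat.mul_ne_zero (by omega) hm0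
  have hsub : S \ {x | ∃ a ∈ S, a ≠ 0 ∧ ∃ b ∈ S, x = q * a + b} ⊆ aperySet S (q * m) :=
    fun x ⟨hxS, hx⟩ => ⟨hxS, fun ⟨b, hbS, hb⟩ => hx ⟨m, hm, hm0, b, hbS, hb.symm⟩⟩
  have := (ncard_le_ncard hsub (finite_aperySet hadd hqm hqm0)).trans
    (ncard_aperySet_le hadd hqm hqm0)
  omega

/-- The Geil–Matsumoto bound is at most the Lewittes bound:
`GM_q(S) = #(S \ (qS* + S)) + 1 ≤ q·m_S + 1`. -/
theorem stmt_5 (S : Set ℕ) (h0 : 0 ∈ S)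
    (hadd : ∀ a ∈ S, ∀ b ∈ S, a + b ∈ S) (hfin : Sᶜ.Finite)
    (m : ℕ) (hm : m ∈ S) (hm0 : m ≠ 0) (hmin : ∀ s ∈ S, s ≠ 0 → m ≤ s)
    (q : ℕ) (hq : 1 ≤ q) :
    (S \ {x | ∃ a ∈ S, a ≠ 0 ∧ ∃ b ∈ S, x = q * a + b}).ncard + 1 ≤ q * m + 1 :=
  stmt_5_general S hadd m hm hm0 q hq
end

section
/- Let S = ⟨h₁, ..., h_t⟩ be a numerical semigroup with h₁ its multiplicity (least nonzero element) and q ≥ 1. Then GM_q(S) = L_q(S) = q·h₁ + 1 if and only if q·(h_i - h₁) ∈ S for every 2 ≤ i ≤ t. -/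
/-!
Write `N = q m`. If `x < y` in `S \ (qS* + S)` were congruent modulo `N`, then
`y = q m + (x + kN) ∈ qS* + S`; so `S \ (qS* + S)` has at most one element in each residue class
modulo `N`, and `GM_q(S) = q m + 1` says exactly that it meets every class.

If `q (a - m) ∈ S` for all `a ∈ S`, then `q a + b - N = q (a - m) + b ∈ S`, so the least element of
`S` in a residue class (it exists because `S` is cofinite) is not in `qS* + S`. Conversely, if every
class is met, take `x` in the class of `q (a - m)`: either `x ≤ q (a - m)`, and then
`q (a - m) ∈ x + Nℕ ⊆ S`, or `x = q a + kN ∈ qS* + S`, which is impossible. Finally, the condition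
for all of `S` follows from the one for the generators, as `q (a + b - m) = q (a - m) + q b`.
-/

/-- The set `qS* + S`. -/
def scaledSumset (S : AddSubmonoid ℕ) (q : ℕ) : Set ℕ :=
  {x | ∃ a ∈ S, a ≠ 0 ∧ ∃ b ∈ S, x = q * a + b}

theorem Nat.exists_eq_add_mul_of_mod_eq {n x y : ℕ} (hxy : x % n = y % n) (hle : x ≤ y) :
    ∃ k, y = x + n * k := by
  obtain ⟨k, hk⟩ := (Nat.modEq_iff_dvd' hle).1 hxy
  exact ⟨k, by omega⟩

theorem Nat.mul_tsub_add_mul {q a m : ℕ} (h : m ≤ a) : q * (a - m) + q * m = q * a := by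
  rw [← mul_add, Nat.sub_add_cancel h]

section

variable {S : AddSubmonoid ℕ} {q m : ℕ}

theorem mul_mul_mem (hm : m ∈ S) (q k : ℕ) : q * m * k ∈ S := by
  rw [mul_right_comm, ← smul_eq_mul]
  exact S.nsmul_mem hm _

theorem mul_add_mem_scaledSumset {a b : ℕ} (ha : a ∈ S) (ha0 : a ≠ 0) (hb : b ∈ S) :
    q * a + b ∈ scaledSumset S q :=
  ⟨a, ha, ha0, b, hb, rfl⟩

theorem add_mul_succ_mem_scaledSumset (hm : m ∈ S) (hm0 : m ≠ 0) {x : ℕ} (hx : x ∈ S) (k : ℕ) :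
    x + q * m * (k + 1) ∈ scaledSumset S q :=
  ⟨m, hm, hm0, x + q * m * k, S.add_mem hx (mul_mul_mem hm q k), by ring⟩

theorem mod_injOn_diff_scaledSumset (hm : m ∈ S) (hm0 : m ≠ 0) :
    Set.InjOn (· % (q * m)) ((S : Set ℕ) \ scaledSumset S q) := by
  suffices ∀ x ∈ (S : Set ℕ) \ scaledSumset S q, ∀ y ∈ (S : Set ℕ) \ scaledSumset S q,
      x % (q * m) = y % (q * m) → x ≤ y → x = y from
    fun x hx y hy hxy => (le_total x y).elim (this x hx y hy hxy)
      fun hle => (this y hy x hx hxy.symm hle).symm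
  intro x hx y hy hxy hle
  obtain ⟨_ | k, rfl⟩ := Nat.exists_eq_add_mul_of_mod_eq hxy hle
  · simp
  · exact absurd (add_mul_succ_mem_scaledSumset hm hm0 hx.1 k) hy.2

theorem ncard_diff_scaledSumset_eq_iff_surjOn (hm : m ∈ S) (hm0 : 0 < m) (hq : 0 < q) :
    ((S : Set ℕ) \ scaledSumset S q).ncard = q * m ↔
      Set.SurjOn (· % (q * m)) ((S : Set ℕ) \ scaledSumset S q) (Set.Iio (q * m)) := by
  have hmaps : Set.MapsTo (· % (q * m)) ((S : Set ℕ) \ scaledSumset S q) (Set.Iio (q * m)) :=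
    fun x _ => Nat.mod_lt x (Nat.mul_pos hq hm0)
  rw [Set.SurjOn, ← (mod_injOn_diff_scaledSumset hm hm0.ne').ncard_image]
  constructor
  · intro hcard
    exact (Set.eq_of_subset_of_ncard_le hmaps.image_subset (by simp [hcard])).ge
  · intro hsurj
    rw [hmaps.image_subset.antisymm hsurj, Set.ncard_Iio_nat]

theorem mul_tsub_mem_of_surjOn (hm : m ∈ S) (hm0 : 0 < m) (hq : 0 < q)
    (hmin : ∀ s ∈ S, s ≠ 0 → m ≤ s)
    (hsurj : Set.SurjOn (· % (q * m)) ((S : Set ℕ) \ scaledSumset S q) (Set.Iio (q * m)))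
    {a : ℕ} (ha : a ∈ S) : q * (a - m) ∈ S := by
  obtain rfl | ha0 := eq_or_ne a 0
  · simp
  obtain ⟨x, hx, hxa⟩ := hsurj (Nat.mod_lt (q * (a - m)) (Nat.mul_pos hq hm0))
  simp only at hxa
  rcases le_total x (q * (a - m)) with hle | hle
  · obtain ⟨k, hk⟩ := Nat.exists_eq_add_mul_of_mod_eq hxa hle
    rw [hk]
    exact S.add_mem hx.1 (mul_mul_mem hm q k)
  · obtain ⟨_ | k, rfl⟩ := Nat.exists_eq_add_mul_of_mod_eq hxa.symm hle
    · simpa using hx.1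
    · have hx_eq : q * (a - m) + q * m * (k + 1) = q * a + q * m * k := by
        rw [mul_add_one, ← Nat.mul_tsub_add_mul (hmin a ha ha0)]
        ring
      exact absurd (hx_eq ▸ mul_add_mem_scaledSumset ha ha0 (mul_mul_mem hm q k)) hx.2

theorem exists_mem_diff_scaledSumset_mod_eq (hm0 : 0 < m) (hq : 0 < q)
    (hmin : ∀ s ∈ S, s ≠ 0 → m ≤ s) (hmul : ∀ a ∈ S, q * (a - m) ∈ S) {x : ℕ} (hx : x ∈ S) :
    ∃ y ∈ (S : Set ℕ) \ scaledSumset S q, y % (q * m) = x % (q * m) := by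
  induction x using Nat.strong_induction_on with
  | _ x ih =>
    by_cases hxT : x ∈ scaledSumset S q
    · obtain ⟨a, ha, ha0, b, hb, rfl⟩ := hxT
      have hdesc : q * (a - m) + b + q * m = q * a + b := by
        rw [add_right_comm, Nat.mul_tsub_add_mul (hmin a ha ha0)]
      have hlt : q * (a - m) + b < q * a + b := by
        rw [← hdesc]; exact Nat.lt_add_of_pos_right (Nat.mul_pos hq hm0)
      obtain ⟨y, hy, hym⟩ := ih _ hlt (S.add_mem (hmul a ha) hb)
      exact ⟨y, hy, by rw [hym, ← hdesc, Nat.add_mod_right]⟩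
    · exact ⟨x, ⟨hx, hxT⟩, rfl⟩

theorem surjOn_of_mul_tsub_mem (hm0 : 0 < m) (hq : 0 < q) (hmin : ∀ s ∈ S, s ≠ 0 → m ≤ s)
    (hfin : (S : Set ℕ)ᶜ.Finite) (hmul : ∀ a ∈ S, q * (a - m) ∈ S) :
    Set.SurjOn (· % (q * m)) ((S : Set ℕ) \ scaledSumset S q) (Set.Iio (q * m)) := by
  intro r (hr : r < q * m)
  obtain ⟨B, hB⟩ := hfin.bddAbove
  have hmem : r + (B + 1) * (q * m) ∈ S := by
    by_contra hnot
    have := hB hnot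
    nlinarith
  obtain ⟨y, hy, hyr⟩ := exists_mem_diff_scaledSumset_mod_eq hm0 hq hmin hmul hmem
  exact ⟨y, hy, by show y % (q * m) = r; rw [hyr, Nat.add_mul_mod_self_right, Nat.mod_eq_of_lt hr]⟩

theorem ncard_diff_scaledSumset_eq_iff (hm : m ∈ S) (hm0 : 0 < m) (hq : 0 < q)
    (hmin : ∀ s ∈ S, s ≠ 0 → m ≤ s) (hfin : (S : Set ℕ)ᶜ.Finite) :
    ((S : Set ℕ) \ scaledSumset S q).ncard = q * m ↔ ∀ a ∈ S, q * (a - m) ∈ S := by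
  rw [ncard_diff_scaledSumset_eq_iff_surjOn hm hm0 hq]
  exact ⟨fun hsurj _ ha => mul_tsub_mem_of_surjOn hm hm0 hq hmin hsurj ha,
    surjOn_of_mul_tsub_mem hm0 hq hmin hfin⟩

end

theorem forall_mul_tsub_mem_closure_iff {s : Set ℕ} {q m : ℕ}
    (hmin : ∀ x ∈ AddSubmonoid.closure s, x ≠ 0 → m ≤ x) :
    (∀ a ∈ AddSubmonoid.closure s, q * (a - m) ∈ AddSubmonoid.closure s) ↔
      ∀ a ∈ s, q * (a - m) ∈ AddSubmonoid.closure s := by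
  refine ⟨fun H a ha => H a (AddSubmonoid.subset_closure ha), fun H a ha => ?_⟩
  induction ha using AddSubmonoid.closure_induction with
  | mem x hx => exact H x hx
  | zero => simp
  | add x y hx hy ihx _ =>
    obtain rfl | hx0 := eq_or_ne x 0
    · simpa
    rw [Nat.sub_add_comm (hmin x hx hx0), mul_add]
    exact add_mem ihx (by rw [← smul_eq_mul]; exact AddSubmonoid.nsmul_mem _ hy q)

/-- Bras-Amorós–Vico-Oton: for `S = ⟨h₁,…,h_t⟩` with multiplicity `h₁`,
`GM_q(S) = L_q(S) = q·h₁ + 1` iff `q·(h_i - h₁) ∈ S` for every `i`. -/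
theorem stmt_14 (t : ℕ) (h : Fin (t + 1) → ℕ) (hpos : ∀ j, 0 < h j)
    (S : Set ℕ)
    (hS : S = {x : ℕ | ∃ c : Fin (t + 1) → ℕ, x = ∑ j, c j * h j})
    (hfin : Sᶜ.Finite)
    (hmin : ∀ s ∈ S, s ≠ 0 → h 0 ≤ s)
    (q : ℕ) (hq : 1 ≤ q) :
    (S \ {x | ∃ a ∈ S, a ≠ 0 ∧ ∃ b ∈ S, x = q * a + b}).ncard + 1 = q * h 0 + 1
      ↔ ∀ j : Fin (t + 1), q * (h j - h 0) ∈ S := by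
  have hclosure : S = AddSubmonoid.closure (Set.range h) := by
    ext x
    simp [hS, AddSubmonoid.mem_closure_range_iff_of_fintype]
  subst hclosure
  have hm : h 0 ∈ AddSubmonoid.closure (Set.range h) :=
    AddSubmonoid.subset_closure (Set.mem_range_self 0)
  exact (add_left_inj 1).trans <|
    (ncard_diff_scaledSumset_eq_iff hm (hpos 0) hq hmin hfin).trans <|
      (forall_mul_tsub_mem_closure_iff hmin).trans Set.forall_mem_range
end

section
/- Let S = ⟨n, n+1, ..., n+t⟩ with 1 ≤ t < n and q ≥ 1. Then GM_q(S) = L_q(S) if and only if q ∈ S, which holds if and only if (q mod n) ≤ ⌊q/n⌋·t. In particular, if q < n then GM_q(S) < L_q(S). -/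
/-!
Let `m` be the multiplicity of a submonoid `S` of `ℕ` and `L = q m`. Two elements of
`S \ (qS* + S)` congruent modulo `L` coincide: otherwise the larger one, `y`, has
`y - L ∈ S`, so `y = q m + (y - L) ∈ qS* + S`. Hence `GM_q(S) - 1` counts at most one element
per residue class modulo `L`.

For `S = ⟨n, …, n + t⟩`: if `q ∈ S`, then `n ≤ q`, everything from `n²` on lies in `S`, and each
residue `r < L` is represented by `r` itself or, when `r ∉ S`, by `L + r`, which is not in
`qS* + S` because `L + r = q a + b` with `a ≥ n` would give `r = q (a - n) + b ∈ S`.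
If `q ∉ S`, the residue of `q` is missed: `q ∉ S`, and `q + j L = q (n + 1) + (j - 1) L` lies in
`qS* + S` for `j ≥ 1`.
-/

/-- The set `qS* + S`, where `S* = S \ {0}`. -/
def qStarAdd (S : AddSubmonoid ℕ) (q : ℕ) : Set ℕ :=
  {x | ∃ a ∈ S, a ≠ 0 ∧ ∃ b ∈ S, x = q * a + b}

section qStarAdd

variable {S : AddSubmonoid ℕ} {q m x : ℕ}

theorem add_mem_qStarAdd {b : ℕ} (hx : x ∈ qStarAdd S q) (hb : b ∈ S) :
    x + b ∈ qStarAdd S q := by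
  obtain ⟨a, ha, ha0, c, hc, rfl⟩ := hx
  exact ⟨a, ha, ha0, c + b, add_mem hc hb, by ring⟩

theorem mul_le_of_mem_qStarAdd (hmin : ∀ a ∈ S, a ≠ 0 → m ≤ a) (hx : x ∈ qStarAdd S q) :
    q * m ≤ x := by
  obtain ⟨a, ha, ha0, b, -, rfl⟩ := hx
  exact (Nat.mul_le_mul_left q (hmin a ha ha0)).trans (Nat.le_add_right _ _)

theorem mem_qStarAdd_of_sub_mem (hm : m ∈ S) (hm0 : m ≠ 0) (hx : q * m ≤ x)
    (hsub : x - q * m ∈ S) : x ∈ qStarAdd S q :=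
  ⟨m, hm, hm0, x - q * m, hsub, by omega⟩

theorem injOn_mod_diff_qStarAdd (hm : m ∈ S) (hm0 : m ≠ 0) :
    Set.InjOn (· % (q * m)) ((S : Set ℕ) \ qStarAdd S q) := by
  suffices key : ∀ x ∈ (S : Set ℕ) \ qStarAdd S q, ∀ y ∈ (S : Set ℕ) \ qStarAdd S q,
      x ≤ y → x % (q * m) = y % (q * m) → x = y by
    intro x hx y hy hxy
    rcases le_total x y with h | h
    · exact key x hx y hy h hxy
    · exact (key y hy x hx h hxy.symm).symm
  rintro x ⟨hxS, -⟩ y ⟨-, hyQ⟩ hxy hmod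
  obtain ⟨j, hj⟩ : q * m ∣ y - x := (Nat.modEq_iff_dvd' hxy).mp hmod
  rcases j with _ | j
  · omega
  have hy : y - q * m = x + j • (q * m) := by rw [smul_eq_mul]; grind
  refine absurd (mem_qStarAdd_of_sub_mem hm hm0 (by grind) ?_) hyQ
  exact hy ▸ add_mem hxS (nsmul_mem (nsmul_mem hm q) j)

theorem mul_add_notMem_qStarAdd (hmin : ∀ a ∈ S, a ≠ 0 → m ≤ a) (hq : q ∈ S) {r : ℕ}
    (hr : r ∉ S) : q * m + r ∉ qStarAdd S q := by
  rintro ⟨a, ha, ha0, b, hb, hab⟩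
  obtain ⟨d, rfl⟩ := Nat.exists_eq_add_of_le (hmin a ha ha0)
  have hrd : r = d • q + b := by rw [smul_eq_mul]; grind
  exact hr (hrd ▸ add_mem (nsmul_mem hq d) hb)

theorem ncard_diff_qStarAdd_eq (hm : m ∈ S) (hm0 : m ≠ 0) (hmin : ∀ a ∈ S, a ≠ 0 → m ≤ a)
    (hq0 : q ≠ 0) (hq : q ∈ S) (hfill : ∀ r < q * m, q * m + r ∈ S) :
    ((S : Set ℕ) \ qStarAdd S q).ncard = q * m := by
  have hL : 0 < q * m := by positivity
  conv_rhs => rw [← Set.ncard_Iio_nat (q * m)]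
  rw [← (injOn_mod_diff_qStarAdd hm hm0).ncard_image]
  congr 1
  refine subset_antisymm (Set.image_subset_iff.mpr fun x _ => Nat.mod_lt x hL) fun r hr => ?_
  rw [Set.mem_Iio] at hr
  by_cases hrS : r ∈ S
  · exact ⟨r, ⟨hrS, fun hrQ => (mul_le_of_mem_qStarAdd hmin hrQ).not_gt hr⟩, Nat.mod_eq_of_lt hr⟩
  · refine ⟨q * m + r, ⟨hfill r hr, mul_add_notMem_qStarAdd hmin hq hrS⟩, ?_⟩
    simp [Nat.mod_eq_of_lt hr]

theorem ncard_diff_qStarAdd_lt (hm : m ∈ S) (hm0 : m ≠ 0) {g : ℕ} (hg : g < q * m)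
    (hgS : g ∉ S) (hgQ : q * m + g ∈ qStarAdd S q) :
    ((S : Set ℕ) \ qStarAdd S q).ncard < q * m := by
  have hL : 0 < q * m := by omega
  have hmaps : ∀ x ∈ (S : Set ℕ) \ qStarAdd S q, x % (q * m) ∈ Set.Iio (q * m) \ {g} := by
    rintro x ⟨hxS, hxQ⟩
    refine ⟨Nat.mod_lt x hL, fun hxg => ?_⟩
    have hx := Nat.mod_add_div x (q * m)
    rw [Set.mem_singleton_iff.mp hxg] at hx
    rcases hk : x / (q * m) with _ | k
    · exact hgS (by simp_all)
    · have hx' : x = q * m + g + k • (q * m) := by rw [smul_eq_mul]; grind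
      exact hxQ (hx' ▸ add_mem_qStarAdd hgQ (nsmul_mem (nsmul_mem hm q) k))
  calc ((S : Set ℕ) \ qStarAdd S q).ncard
      ≤ (Set.Iio (q * m) \ {g}).ncard :=
        Set.ncard_le_ncard_of_injOn _ hmaps (injOn_mod_diff_qStarAdd hm hm0)
          (Set.finite_Iio _).sdiff
    _ < q * m := by
        rw [Set.ncard_sdiff_singleton_of_mem (Set.mem_Iio.mpr hg), Set.ncard_Iio_nat]
        omega

end qStarAdd

def consecutiveSemigroup (n t : ℕ) : AddSubmonoid ℕ :=
  AddSubmonoid.closure (Set.range fun i : Fin (t + 1) => n + (i : ℕ))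

namespace consecutiveSemigroup

variable {n t x : ℕ}

theorem mem_iff_exists_sum :
    x ∈ consecutiveSemigroup n t ↔ ∃ c : Fin (t + 1) → ℕ, x = ∑ i, c i * (n + i) := by
  simp [consecutiveSemigroup, AddSubmonoid.mem_closure_range_iff_of_fintype]

theorem add_mem_of_le {j : ℕ} (hj : j ≤ t) : n + j ∈ consecutiveSemigroup n t :=
  AddSubmonoid.subset_closure ⟨⟨j, by omega⟩, rfl⟩

theorem mem_iff : x ∈ consecutiveSemigroup n t ↔ ∃ k, k * n ≤ x ∧ x ≤ k * (n + t) := by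
  constructor
  · intro hx
    induction hx using AddSubmonoid.closure_induction with
    | mem y hy =>
      obtain ⟨i, rfl⟩ := hy
      exact ⟨1, by simp, by simpa using i.is_le⟩
    | zero => exact ⟨0, by simp⟩
    | add y z _ _ hy hz =>
      obtain ⟨k, hk⟩ := hy
      obtain ⟨l, hl⟩ := hz
      exact ⟨k + l, by grind, by grind⟩
  · rintro ⟨k, hk⟩
    induction k generalizing x with
    | zero => simp_all
    | succ k ih =>
      -- peel off one generator `n + j` so that the rest lies in `[k n, k (n + t)]`
      have hj : min t (x - (k + 1) * n) ≤ t := min_le_left _ _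
      have hx : x = (x - n - min t (x - (k + 1) * n)) + (n + min t (x - (k + 1) * n)) := by
        grind
      rw [hx]
      exact add_mem (ih ⟨by grind, by grind⟩) (add_mem_of_le hj)

theorem mem_iff_mod_le (hn : 0 < n) : x ∈ consecutiveSemigroup n t ↔ x % n ≤ x / n * t := by
  have hx := Nat.mod_add_div' x n
  rw [mem_iff]
  constructor
  · rintro ⟨k, hkx, hxk⟩
    have hk : k ≤ x / n := (Nat.le_div_iff_mul_le hn).mpr hkx
    nlinarith [Nat.mul_le_mul_right t hk]
  · exact fun h => ⟨x / n, Nat.div_mul_le_self x n, by nlinarith⟩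

theorem le_of_mem (hx : x ∈ consecutiveSemigroup n t) (hx0 : x ≠ 0) : n ≤ x := by
  obtain ⟨k, hkx, hxk⟩ := mem_iff.mp hx
  rcases k with _ | k
  · simp_all
  · nlinarith

theorem mem_of_mul_self_le (hn : 0 < n) (ht : 1 ≤ t) (hx : n * n ≤ x) :
    x ∈ consecutiveSemigroup n t := by
  have hnx : n ≤ x / n := (Nat.le_div_iff_mul_le hn).mpr hx
  rw [mem_iff_mod_le hn]
  nlinarith [Nat.mod_lt x hn]

end consecutiveSemigroup

open consecutiveSemigroup in
/-- For `S = ⟨n, n+1, …, n+t⟩` with `1 ≤ t < n` and `q ≥ 1`: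
`GM_q(S) = L_q(S)` iff `q ∈ S`, iff `(q mod n) ≤ ⌊q/n⌋·t`; and if `q < n`
then `GM_q(S) < L_q(S)`. -/
theorem stmt_15 (n t : ℕ) (ht1 : 1 ≤ t) (htn : t < n)
    (S : Set ℕ)
    (hS : S = {x : ℕ | ∃ c : Fin (t + 1) → ℕ, x = ∑ i, c i * (n + i)})
    (q : ℕ) (hq : 1 ≤ q) :
    ((S \ {x | ∃ a ∈ S, a ≠ 0 ∧ ∃ b ∈ S, x = q * a + b}).ncard + 1 = q * n + 1
        ↔ q ∈ S) ∧
    (q ∈ S ↔ q % n ≤ q / n * t) ∧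
    (q < n →
      (S \ {x | ∃ a ∈ S, a ≠ 0 ∧ ∃ b ∈ S, x = q * a + b}).ncard + 1 < q * n + 1) := by
  obtain rfl : S = consecutiveSemigroup n t :=
    hS.trans (Set.ext fun _ => mem_iff_exists_sum.symm)
  set T := consecutiveSemigroup n t
  rw [show {x | ∃ a ∈ (T : Set ℕ), a ≠ 0 ∧ ∃ b ∈ (T : Set ℕ), x = q * a + b} = qStarAdd T q
    from rfl]
  have hn : 0 < n := by omega
  have hnT : n ∈ T := by simpa using add_mem_of_le (n := n) (Nat.zero_le t)
  have hcard_eq (hqT : q ∈ T) : ((T : Set ℕ) \ qStarAdd T q).ncard = q * n :=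
    ncard_diff_qStarAdd_eq hnT hn.ne' (fun _ => le_of_mem) (by omega) hqT fun _ _ =>
      mem_of_mul_self_le hn ht1 (by nlinarith [le_of_mem hqT (by omega)])
  have hcard_lt (hqT : q ∉ T) : ((T : Set ℕ) \ qStarAdd T q).ncard < q * n :=
    ncard_diff_qStarAdd_lt hnT hn.ne' (by nlinarith) hqT
      ⟨n + 1, add_mem_of_le ht1, by omega, 0, zero_mem _, by ring⟩
  refine ⟨⟨fun h => ?_, fun hqT => by rw [hcard_eq hqT]⟩, mem_iff_mod_le hn, fun hqn => ?_⟩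
  · by_contra hqT
    have := hcard_lt hqT
    omega
  · have := hcard_lt fun hqT => (le_of_mem hqT (by omega)).not_gt hqn
    omega
end

section
/- Let S = ⟨n, n+1, ..., n+t⟩ with 1 ≤ t < n and q ≥ 1. Then GM_q(S) = 1 + Σ_{k=0}^{n-1} min_{1 ≤ i ≤ t} { q, C_{k,i} }, where k_i := (k - iq) mod n and C_{k,i} := q - ⌈k/t⌉ + ⌈k_i/t⌉ + ⌈(iq - k)/n⌉. -/
/-!
Write `x = x % n + n * (x / n)`. An element of residue `k` lies in `S = ⟨n, …, n + t⟩` iff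
`k ≤ t * (x / n)`, i.e. iff its quotient `x / n` is at least `⌈k / t⌉`. Every nonzero element of `S`
is a generator `n + i` plus an element of `S`, so `qS* + S` is the union of the translates
`q (n + i) + S`, `0 ≤ i ≤ t`; in residue class `k` the translate by `q (n + i)` starts at quotient
`⌈k / t⌉ + C_{k,i}`, and `C_{k,0} = q`. Hence `S \ (qS* + S)` has exactly
`min (q, min_{1 ≤ i ≤ t} C_{k,i})` elements in residue class `k`.
-/

open Finset

theorem Int.ceil_intCast_div_natCast_le_iff {t : ℕ} (ht : 0 < t) (a b : ℤ) :
    ⌈(a : ℚ) / t⌉ ≤ b ↔ a ≤ t * b := by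
  rw [Int.ceil_le, div_le_iff₀ (by exact_mod_cast ht), mul_comm]
  norm_cast

theorem ncard_eq_sum_of_mem_iff {n : ℕ} (hn : 0 < n) {A : Set ℕ} {a m : ℕ → ℤ}
    (ha : ∀ k, 0 ≤ a k) (hm : ∀ k < n, 0 ≤ m k)
    (hA : ∀ x, x ∈ A ↔
      a (x % n) ≤ ((x / n : ℕ) : ℤ) ∧ ((x / n : ℕ) : ℤ) < a (x % n) + m (x % n)) :
    (A.ncard : ℤ) = ∑ k ∈ range n, m k := by
  have hdigits {k j : ℕ} (hk : k < n) : (k + n * j) % n = k ∧ (k + n * j) / n = j := by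
    refine ⟨by simp [Nat.mod_eq_of_lt hk], ?_⟩
    rw [Nat.add_mul_div_left _ _ hn, Nat.div_eq_of_lt hk, zero_add]
  have hA' : A = ↑((range n).biUnion fun k =>
      (Ico (a k).toNat (a k + m k).toNat).image fun j => k + n * j) := by
    ext x
    simp only [hA, coe_biUnion, coe_range, Set.mem_Iio, coe_image, coe_Ico, Set.mem_iUnion,
      Set.mem_image, Set.mem_Ico, exists_prop]
    constructor
    · rintro ⟨h₁, h₂⟩
      exact ⟨x % n, Nat.mod_lt x hn, x / n, ⟨Int.toNat_le.mpr h₁, Int.lt_toNat.mpr h₂⟩,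
        Nat.mod_add_div x n⟩
    · rintro ⟨k, hk, j, ⟨h₁, h₂⟩, rfl⟩
      rw [(hdigits hk).1, (hdigits hk).2]
      exact ⟨Int.toNat_le.mp h₁, Int.lt_toNat.mp h₂⟩
  rw [hA', Set.ncard_coe_finset, card_biUnion]
  · push_cast
    refine sum_congr rfl fun k hk => ?_
    rw [card_image_of_injective _ fun j₁ j₂ h => by simpa [hn.ne'] using h, Nat.card_Ico]
    have := ha k
    have := hm k (mem_range.mp hk)
    omega
  · intro k₁ hk₁ k₂ hk₂ hne
    simp only [Function.onFun, disjoint_left, mem_image]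
    rintro _ ⟨j₁, -, rfl⟩ ⟨j₂, -, h⟩
    apply hne
    calc k₁ = (k₁ + n * j₁) % n := (hdigits (mem_range.mp hk₁)).1.symm
      _ = k₂ := by rw [← h, (hdigits (mem_range.mp hk₂)).1]

def intervalSemigroup (n t : ℕ) : AddSubmonoid ℕ :=
  AddSubmonoid.closure (Set.range fun i : Fin (t + 1) => n + (i : ℕ))

/-- The paper's `C_{k,i}`. -/
def levelGap (n t q k i : ℕ) : ℤ :=
  (q : ℤ) - ⌈(k : ℚ) / t⌉ + ⌈(((((k : ℤ) - i * q) % n).toNat : ℚ)) / t⌉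
    + ⌈((i : ℚ) * q - k) / n⌉

section IntervalSemigroup

variable {n t : ℕ}

theorem coe_intervalSemigroup :
    (intervalSemigroup n t : Set ℕ) = {x | ∃ c : Fin (t + 1) → ℕ, x = ∑ i, c i * (n + i)} := by
  ext x
  simp only [SetLike.mem_coe, intervalSemigroup, AddSubmonoid.mem_closure_range_iff_of_fintype,
    smul_eq_mul]
  rfl

theorem add_mem_intervalSemigroup {i : ℕ} (hi : i ≤ t) {s : ℕ} (hs : s ∈ intervalSemigroup n t) :
    n + i + s ∈ intervalSemigroup n t :=
  add_mem (AddSubmonoid.subset_closure ⟨⟨i, Nat.lt_succ_of_le hi⟩, rfl⟩) hs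

theorem mem_intervalSemigroup_iff {x : ℕ} :
    x ∈ intervalSemigroup n t ↔ ∃ j e, e ≤ j * t ∧ x = j * n + e := by
  constructor
  · intro hx
    induction hx using AddSubmonoid.closure_induction with
    | mem x hx =>
      obtain ⟨i, rfl⟩ := hx
      exact ⟨1, i, by simpa using i.is_le, by ring⟩
    | zero => exact ⟨0, 0, by simp, by simp⟩
    | add x y _ _ hx hy =>
      obtain ⟨j₁, e₁, he₁, rfl⟩ := hx
      obtain ⟨j₂, e₂, he₂, rfl⟩ := hy
      exact ⟨j₁ + j₂, e₁ + e₂, by rw [add_mul]; omega, by ring⟩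
  · rintro ⟨j, e, he, rfl⟩
    induction j generalizing e with
    | zero => simp_all
    | succ j ih =>
      have hsplit : (j + 1) * n + e = n + min e t + (j * n + (e - min e t)) := by
        rw [add_mul]; omega
      rw [hsplit]
      exact add_mem_intervalSemigroup (min_le_right e t) (ih _ (by rw [add_mul] at he; omega))

theorem exists_eq_add_of_mem_intervalSemigroup {a : ℕ} (ha : a ∈ intervalSemigroup n t)
    (ha0 : a ≠ 0) : ∃ i ≤ t, ∃ s ∈ intervalSemigroup n t, a = n + i + s := by
  obtain ⟨_ | j, e, he, rfl⟩ := mem_intervalSemigroup_iff.mp ha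
  · simp_all
  refine ⟨min e t, min_le_right e t, j * n + (e - min e t),
    mem_intervalSemigroup_iff.mpr ⟨j, e - min e t, ?_, rfl⟩, ?_⟩ <;> rw [add_mul] at * <;> omega

theorem mem_intervalSemigroup_iff_mod_le (hn : 0 < n) {x : ℕ} :
    x ∈ intervalSemigroup n t ↔ x % n ≤ t * (x / n) := by
  rw [mem_intervalSemigroup_iff]
  constructor
  · rintro ⟨j, e, he, rfl⟩
    have hdecomp := Nat.mod_add_div (j * n + e) n
    have hmod := Nat.mod_lt (j * n + e) hn
    set r := (j * n + e) % n
    set c := (j * n + e) / n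
    have hjc : j ≤ c := by
      by_contra! h
      nlinarith
    nlinarith
  · intro h
    exact ⟨x / n, x % n, by rwa [mul_comm], (Nat.div_add_mod' x n).symm⟩

theorem exists_mem_intervalSemigroup_eq_add_iff (ht : 0 < t) (hn : 0 < n) (c x : ℕ) :
    (∃ b ∈ intervalSemigroup n t, x = c + b) ↔ ((x : ℤ) - c) % n ≤ t * (((x : ℤ) - c) / n) := by
  by_cases hcx : c ≤ x
  · have hcast : (x : ℤ) - c = ((x - c : ℕ) : ℤ) := by omega
    rw [hcast, ← Int.natCast_mod, ← Int.natCast_div]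
    norm_cast
    rw [← mem_intervalSemigroup_iff_mod_le hn]
    exact ⟨fun ⟨b, hb, h⟩ => by rwa [h, Nat.add_sub_cancel_left], fun h => ⟨x - c, h, by omega⟩⟩
  · have hdiv : ((x : ℤ) - c) / n < 0 := Int.ediv_neg_of_neg_of_pos (by omega) (by omega)
    have hmod : 0 ≤ ((x : ℤ) - c) % n := Int.emod_nonneg _ (by omega)
    refine iff_of_false (fun ⟨b, _, h⟩ => hcx (h ▸ Nat.le_add_right c b)) ?_
    nlinarith

theorem levelGap_eq_ediv (hn : 0 < n) (q k i : ℕ) :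
    levelGap n t q k i = q - ⌈(k : ℚ) / t⌉ + ⌈((((k : ℤ) - i * q) % n : ℤ) : ℚ) / t⌉
      - ((k : ℤ) - i * q) / n := by
  have hr : 0 ≤ ((k : ℤ) - i * q) % n := Int.emod_nonneg _ (by omega)
  have hceil : ⌈((i : ℚ) * q - k) / n⌉ = -(((k : ℤ) - i * q) / n) := by
    rw [← Rat.floor_intCast_div_natCast, ← Int.ceil_neg]
    push_cast
    ring_nf
  rw [levelGap, hceil, ← Int.cast_natCast (R := ℚ) (_ % _ : ℤ).toNat, Int.toNat_of_nonneg hr]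
  ring

theorem levelGap_zero {k : ℕ} (hk : k < n) (q : ℕ) : levelGap n t q k 0 = q := by
  rw [levelGap_eq_ediv (by omega)]
  simp [Int.emod_eq_of_lt, Int.ediv_eq_zero_of_lt, hk]

theorem levelGap_nonneg (ht : 0 < t) {q k i : ℕ} (hk : k < n) (hi : i ≤ t) :
    0 ≤ levelGap n t q k i := by
  rw [levelGap_eq_ediv (by omega)]
  set d := ((k : ℤ) - i * q) / n
  set r := ((k : ℤ) - i * q) % n
  have hd : d < 1 := (Int.ediv_lt_iff_lt_mul (by omega)).mpr (by nlinarith)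
  have hr : r = k - i * q - n * d := Int.emod_def _ _
  have hrc : r ≤ t * ⌈(r : ℚ) / t⌉ := (Int.ceil_intCast_div_natCast_le_iff ht _ _).mp le_rfl
  suffices ⌈((k : ℤ) : ℚ) / t⌉ ≤ q + ⌈(r : ℚ) / t⌉ - d by rw [Int.cast_natCast] at this; linarith
  rw [Int.ceil_intCast_div_natCast_le_iff ht]
  have hit : (i : ℤ) ≤ t := by exact_mod_cast hi
  nlinarith

theorem mem_intervalSemigroup_iff_ceil_le (ht : 0 < t) (hn : 0 < n) (x : ℕ) :
    x ∈ intervalSemigroup n t ↔ ⌈((x % n : ℕ) : ℚ) / t⌉ ≤ ((x / n : ℕ) : ℤ) := by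
  rw [mem_intervalSemigroup_iff_mod_le hn, ← Int.cast_natCast (R := ℚ),
    Int.ceil_intCast_div_natCast_le_iff ht]
  norm_cast

theorem exists_mem_intervalSemigroup_eq_mul_add_iff (ht : 0 < t) (hn : 0 < n) (q i x : ℕ) :
    (∃ b ∈ intervalSemigroup n t, x = q * (n + i) + b) ↔
      ⌈((x % n : ℕ) : ℚ) / t⌉ + levelGap n t q (x % n) i ≤ ((x / n : ℕ) : ℤ) := by
  have hx : (x : ℤ) - (q * (n + i) : ℕ) = ((x % n : ℕ) - i * q) + n * ((x / n : ℕ) - q) := by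
    have := congrArg (Nat.cast (R := ℤ)) (Nat.mod_add_div x n)
    push_cast at this ⊢
    linear_combination -this
  rw [exists_mem_intervalSemigroup_eq_add_iff ht hn, hx, Int.add_mul_emod_self_left,
    Int.add_mul_ediv_left _ _ (by omega), levelGap_eq_ediv hn,
    ← Int.ceil_intCast_div_natCast_le_iff ht]
  constructor <;> intro h <;> linarith

theorem mul_add_mem_intervalSemigroup_iff (hn : 0 < n) (q x : ℕ) :
    (∃ a ∈ intervalSemigroup n t, a ≠ 0 ∧ ∃ b ∈ intervalSemigroup n t, x = q * a + b) ↔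
      ∃ i ≤ t, ∃ b ∈ intervalSemigroup n t, x = q * (n + i) + b := by
  constructor
  · rintro ⟨a, ha, ha0, b, hb, rfl⟩
    obtain ⟨i, hi, s, hs, rfl⟩ := exists_eq_add_of_mem_intervalSemigroup ha ha0
    exact ⟨i, hi, q * s + b, add_mem (nsmul_mem hs q) hb, by ring⟩
  · rintro ⟨i, hi, b, hb, rfl⟩
    exact ⟨n + i, by simpa using add_mem_intervalSemigroup hi (zero_mem _), by omega, b, hb, rfl⟩

theorem mem_diff_mul_add_iff (ht : 0 < t) (hn : 0 < n) (q x : ℕ) :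
    x ∈ (intervalSemigroup n t : Set ℕ) \
        {x | ∃ a ∈ intervalSemigroup n t, a ≠ 0 ∧ ∃ b ∈ intervalSemigroup n t, x = q * a + b} ↔
      ⌈((x % n : ℕ) : ℚ) / t⌉ ≤ ((x / n : ℕ) : ℤ) ∧
        ((x / n : ℕ) : ℤ) < ⌈((x % n : ℕ) : ℚ) / t⌉ + (Icc 1 t).inf' (nonempty_Icc.mpr ht)
          fun i => min (q : ℤ) (levelGap n t q (x % n) i) := by
  have hk : x % n < n := Nat.mod_lt x hn
  rw [Set.mem_sdiff, SetLike.mem_coe, mem_intervalSemigroup_iff_ceil_le ht hn, Set.mem_ofPred_eq,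
    mul_add_mem_intervalSemigroup_iff hn]
  simp only [exists_mem_intervalSemigroup_eq_mul_add_iff ht hn, not_exists, not_and, not_le]
  rw [← sub_lt_iff_lt_add', lt_inf'_iff]
  simp only [lt_min_iff, mem_Icc]
  refine and_congr_right fun _ => ⟨fun h i hi => ⟨?_, by linarith [h i hi.2]⟩, fun h i hi => ?_⟩
  · linarith [levelGap_zero (t := t) hk q ▸ h 0 (Nat.zero_le t)]
  · rcases Nat.eq_zero_or_pos i with rfl | hi0
    · linarith [levelGap_zero (t := t) hk q, (h 1 ⟨le_rfl, ht⟩).1]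
    · linarith [(h i ⟨hi0, hi⟩).2]

end IntervalSemigroup

theorem stmt_16_general (n t : ℕ) (ht1 : 1 ≤ t) (htn : t < n)
    (S : Set ℕ)
    (hS : S = {x : ℕ | ∃ c : Fin (t + 1) → ℕ, x = ∑ i, c i * (n + i)})
    (q : ℕ) :
    ((S \ {x | ∃ a ∈ S, a ≠ 0 ∧ ∃ b ∈ S, x = q * a + b}).ncard : ℤ) + 1
      = 1 + ∑ k ∈ Finset.range n,
          (Finset.Icc 1 t).inf' (Finset.nonempty_Icc.mpr ht1) (fun i =>
            min (q : ℤ)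
              ((q : ℤ) - ⌈(k : ℚ) / t⌉
                + ⌈(((((k : ℤ) - i * q) % n).toNat : ℚ)) / t⌉
                + ⌈((i : ℚ) * q - k) / n⌉)) := by
  have hn : 0 < n := by omega
  rw [← coe_intervalSemigroup] at hS
  subst hS
  rw [add_comm]
  congr 1
  refine ncard_eq_sum_of_mem_iff hn (a := fun k => ⌈(k : ℚ) / t⌉)
    (m := fun k => (Icc 1 t).inf' _ fun i => min (q : ℤ) (levelGap n t q k i))
    (fun k => Int.ceil_nonneg (by positivity)) (fun k hk => ?_) (mem_diff_mul_add_iff ht1 hn q)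
  exact (le_inf'_iff _ _).mpr fun i hi =>
    le_min (Nat.cast_nonneg q) (levelGap_nonneg ht1 hk (mem_Icc.mp hi).2)

/-- For `S = ⟨n, n+1, …, n+t⟩` with `1 ≤ t < n` and `q ≥ 1`:
`GM_q(S) = 1 + Σ_{k=0}^{n-1} min_{1 ≤ i ≤ t} {q, C_{k,i}}`, where
`k_i := (k - iq) mod n` and `C_{k,i} := q - ⌈k/t⌉ + ⌈k_i/t⌉ + ⌈(iq - k)/n⌉`. -/
theorem stmt_16 (n t : ℕ) (ht1 : 1 ≤ t) (htn : t < n)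
    (S : Set ℕ)
    (hS : S = {x : ℕ | ∃ c : Fin (t + 1) → ℕ, x = ∑ i, c i * (n + i)})
    (q : ℕ) (hq : 1 ≤ q) :
    ((S \ {x | ∃ a ∈ S, a ≠ 0 ∧ ∃ b ∈ S, x = q * a + b}).ncard : ℤ) + 1
      = 1 + ∑ k ∈ Finset.range n,
          (Finset.Icc 1 t).inf' (Finset.nonempty_Icc.mpr ht1) (fun i =>
            min (q : ℤ)
              ((q : ℤ) - ⌈(k : ℚ) / t⌉
                + ⌈(((((k : ℤ) - i * q) % n).toNat : ℚ)) / t⌉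
                + ⌈((i : ℚ) * q - k) / n⌉)) :=
  stmt_16_general n t ht1 htn S hS q
end
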